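/- arXiv:2005.06398 — 2 statements merged into one kernel-verified Lean document; each statement's English description precedes it below -/
import Mathlib

section
/- For every x ∈ ℝ, the Frobenius distance of W_x from the set of matrices of rank at most 1 equals the smallest singular value: D(W_x, M₁) = s₂(x) = (√(x² + 4) − |x|)/2. The function x ↦ s₂(x) is even, strictly decreasing on [0, ∞), attains its maximum value 1 at x = 0, and tends to 0 as |x| → ∞. Consequently every W in the solution set S has rank 2, yet inf_{W ∈ S} D(W, M₁) = 0 (the infimal rank of S is 1). -/
open Matrix Filter

/-- The matrix `W_x = [[x,1],[1,0]]`. -/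
noncomputable def Wmat (x : ℝ) : Matrix (Fin 2) (Fin 2) ℝ := !![x, 1; 1, 0]

/-- `s₂(x) = (√(x²+4) − |x|)/2`, the smallest singular value of `W_x`. -/
noncomputable def s2 (x : ℝ) : ℝ := (Real.sqrt (x ^ 2 + 4) - |x|) / 2

/-- Frobenius norm of a real matrix. -/
noncomputable def frobNorm {m n : ℕ} (A : Matrix (Fin m) (Fin n) ℝ) : ℝ :=
  Real.sqrt (∑ i, ∑ j, A i j ^ 2)

/-- Frobenius distance of a 2×2 matrix from the set `M₁` of matrices of rank at most `1`. -/
noncomputable def distRank1 (A : Matrix (Fin 2) (Fin 2) ℝ) : ℝ :=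
  sInf {r : ℝ | ∃ M : Matrix (Fin 2) (Fin 2) ℝ, M.rank ≤ 1 ∧ r = frobNorm (A - M)}

/-- The solution set `S`. -/
def solSet : Set (Matrix (Fin 2) (Fin 2) ℝ) :=
  {W | W 0 1 = 1 ∧ W 1 0 = 1 ∧ W 1 1 = 0}

lemma s2_pos (x : ℝ) : 0 < s2 x := by
  have h : |x| < Real.sqrt (x ^ 2 + 4) := by
    rw [← Real.sqrt_sq_eq_abs]
    exact Real.sqrt_lt_sqrt (sq_nonneg x) (by nlinarith)
  unfold s2; linarith

lemma s2_key (x : ℝ) : s2 x ^ 2 + |x| * s2 x = 1 := by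
  have hs : Real.sqrt (x ^ 2 + 4) ^ 2 = x ^ 2 + 4 := Real.sq_sqrt (by positivity)
  have ha : |x| ^ 2 = x ^ 2 := sq_abs x
  unfold s2; nlinarith [hs, ha]

lemma s2_even (x : ℝ) : s2 (-x) = s2 x := by unfold s2; rw [abs_neg, neg_pow]; ring_nf

lemma s2_anti : StrictAntiOn s2 (Set.Ici 0) := by
  intro a ha b hb hab
  simp only [Set.mem_Ici] at ha hb
  unfold s2
  rw [abs_of_nonneg ha, abs_of_nonneg hb]
  have hsa : Real.sqrt (a ^ 2 + 4) ^ 2 = a ^ 2 + 4 := Real.sq_sqrt (by positivity)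
  have hsb : Real.sqrt (b ^ 2 + 4) ^ 2 = b ^ 2 + 4 := Real.sq_sqrt (by positivity)
  have h1 : 0 ≤ Real.sqrt (a ^ 2 + 4) := Real.sqrt_nonneg _
  have h2 : 0 ≤ Real.sqrt (b ^ 2 + 4) := Real.sqrt_nonneg _
  have ha' : a < Real.sqrt (a ^ 2 + 4) := by nlinarith
  have hb' : b < Real.sqrt (b ^ 2 + 4) := by nlinarith
  nlinarith [mul_pos (show (0:ℝ) < b - a by linarith)
    (show (0:ℝ) < Real.sqrt (a ^ 2 + 4) + Real.sqrt (b ^ 2 + 4) by linarith)]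

lemma s2_zero : s2 0 = 1 := by
  unfold s2
  have : Real.sqrt ((0:ℝ) ^ 2 + 4) = 2 := by
    rw [show ((0:ℝ) ^ 2 + 4) = 2 ^ 2 by norm_num, Real.sqrt_sq (by norm_num)]
  rw [this]; norm_num

lemma s2_le_one (x : ℝ) : s2 x ≤ 1 := by
  have h : Real.sqrt (x ^ 2 + 4) ≤ |x| + 2 := by
    rw [show |x| + 2 = Real.sqrt ((|x| + 2) ^ 2) from (Real.sqrt_sq (by positivity)).symm]
    exact Real.sqrt_le_sqrt (by nlinarith [abs_nonneg x, sq_abs x])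
  unfold s2; linarith

lemma s2_eq_div (x : ℝ) : s2 x = 2 / (Real.sqrt (x ^ 2 + 4) + |x|) := by
  have h : 0 < Real.sqrt (x ^ 2 + 4) + |x| := by
    have : 0 < Real.sqrt (x ^ 2 + 4) := Real.sqrt_pos.mpr (by positivity)
    positivity
  rw [eq_div_iff h.ne']
  have hs : Real.sqrt (x ^ 2 + 4) ^ 2 = x ^ 2 + 4 := Real.sq_sqrt (by positivity)
  have ha : |x| ^ 2 = x ^ 2 := sq_abs x
  unfold s2; nlinarith [hs, ha]

lemma denom_tendsto_top : Tendsto (fun x : ℝ => Real.sqrt (x ^ 2 + 4) + |x|) atTop atTop := by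
  apply tendsto_atTop_mono (fun x => ?_) tendsto_id
  have := Real.sqrt_nonneg (x ^ 2 + 4)
  have := le_abs_self x
  simp only [id_eq]; linarith

lemma denom_tendsto_bot : Tendsto (fun x : ℝ => Real.sqrt (x ^ 2 + 4) + |x|) atBot atTop := by
  apply tendsto_atTop_mono (fun x => ?_) tendsto_neg_atBot_atTop
  have := Real.sqrt_nonneg (x ^ 2 + 4)
  have := neg_abs_le x
  linarith

lemma s2_tendsto_top : Tendsto s2 atTop (nhds 0) := by
  rw [funext s2_eq_div]
  exact Tendsto.div_atTop tendsto_const_nhds denom_tendsto_top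

lemma s2_tendsto_bot : Tendsto s2 atBot (nhds 0) := by
  rw [funext s2_eq_div]
  exact Tendsto.div_atTop tendsto_const_nhds denom_tendsto_bot

lemma rank_vecMulVec_le' (u v : Fin 2 → ℝ) : (Matrix.vecMulVec u v).rank ≤ 1 := by
  rw [Matrix.vecMulVec_eq (Fin 1)]
  calc (Matrix.replicateCol (Fin 1) u * Matrix.replicateRow (Fin 1) v).rank
      ≤ (Matrix.replicateRow (Fin 1) v).rank := Matrix.rank_mul_le_right _ _
    _ ≤ 1 := by simpa using Matrix.rank_le_card_height (Matrix.replicateRow (Fin 1) v)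

lemma exists_ker (M : Matrix (Fin 2) (Fin 2) ℝ) (hM : M.rank ≤ 1) :
    ∃ v : Fin 2 → ℝ, v ≠ 0 ∧ M.mulVec v = 0 := by
  rw [Matrix.exists_mulVec_eq_zero_iff]
  by_contra hdet
  have hu : IsUnit M := (Matrix.isUnit_iff_isUnit_det M).mpr (isUnit_iff_ne_zero.mpr hdet)
  have := Matrix.rank_of_isUnit M hu
  simp at this; omega

/-- pure algebra: the spectral lower bound -/
lemma lb_alg (x t μ a b c d v0 v1 : ℝ) (htpos : 0 < t)
    (hμsq : μ ^ 2 = x * μ + 1) (hμt : μ ^ 2 = t ^ 2) (hsign : x * μ ≤ 0)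
    (hv : 0 < v0 ^ 2 + v1 ^ 2)
    (e0 : a * v0 + b * v1 = x * v0 + v1) (e1 : c * v0 + d * v1 = v0) :
    t ^ 2 ≤ a ^ 2 + b ^ 2 + (c ^ 2 + d ^ 2) := by
  have hCS : (a ^ 2 + b ^ 2 + (c ^ 2 + d ^ 2)) * (v0 ^ 2 + v1 ^ 2) ≥
      (a * v0 + b * v1) ^ 2 + (c * v0 + d * v1) ^ 2 := by
    nlinarith [sq_nonneg (a * v1 - b * v0), sq_nonneg (c * v1 - d * v0)]
  rw [e0, e1] at hCS
  have hid : ((x * v0 + v1) ^ 2 + v0 ^ 2 - μ ^ 2 * (v0 ^ 2 + v1 ^ 2)) * μ =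
      -x * (v0 - μ * v1) ^ 2 := by
    linear_combination (-(μ + x) * v0 ^ 2 - μ * v1 ^ 2) * hμsq
  have hμne : μ ≠ 0 := by intro h; rw [h] at hμt; nlinarith
  have hspec : (x * v0 + v1) ^ 2 + v0 ^ 2 ≥ t ^ 2 * (v0 ^ 2 + v1 ^ 2) := by
    rw [← hμt]
    rcases lt_or_gt_of_ne hμne with hμneg | hμpos
    · have hx : 0 ≤ x := by nlinarith
      nlinarith [sq_nonneg (v0 - μ * v1), hid]
    · have hx : x ≤ 0 := by nlinarith
      nlinarith [sq_nonneg (v0 - μ * v1), hid]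
  exact le_of_mul_le_mul_right (by nlinarith) hv

/-- pure algebra: the sum of squares of the residual -/
lemma sum_alg (x t μ : ℝ) (hμsq : μ ^ 2 = x * μ + 1) (hμt : μ ^ 2 = t ^ 2) :
    (μ / ((x - μ) ^ 2 + 1)) ^ 2 + (1 / ((x - μ) ^ 2 + 1)) ^ 2 +
      ((1 / ((x - μ) ^ 2 + 1)) ^ 2 + (-((x - μ) / ((x - μ) ^ 2 + 1))) ^ 2) = t ^ 2 := by
  have hd : (0:ℝ) < (x - μ) ^ 2 + 1 := by positivity
  have h1 : μ * ((x - μ) ^ 2 + 1) = 2 * μ - x := by linear_combination (μ - x) * hμsq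
  field_simp
  nlinarith [h1, hμt, hd]

lemma Wmat_sub {x μ : ℝ} (hμsq : μ ^ 2 = x * μ + 1) :
    Wmat x - Matrix.vecMulVec ![(x - μ) / ((x - μ) ^ 2 + 1) * (x - μ), (x - μ) / ((x - μ) ^ 2 + 1)]
      ![x - μ, 1] =
    !![μ / ((x - μ) ^ 2 + 1), 1 / ((x - μ) ^ 2 + 1);
       1 / ((x - μ) ^ 2 + 1), -((x - μ) / ((x - μ) ^ 2 + 1))] := by
  have hd : (0:ℝ) < (x - μ) ^ 2 + 1 := by positivity
  ext i j
  fin_cases i <;> fin_cases j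
  · simp [Wmat, Matrix.vecMulVec_apply, Matrix.sub_apply]
    field_simp
    linear_combination (μ - x) * hμsq
  · simp [Wmat, Matrix.vecMulVec_apply, Matrix.sub_apply]
    field_simp
    ring
  · simp [Wmat, Matrix.vecMulVec_apply, Matrix.sub_apply]
    field_simp
    ring
  · simp [Wmat, Matrix.vecMulVec_apply, Matrix.sub_apply]

lemma distRank1_Wmat (x : ℝ) : distRank1 (Wmat x) = s2 x := by
  have htpos : 0 < s2 x := s2_pos x
  have hkey := s2_key x
  set t := s2 x with ht
  obtain ⟨μ, hμsq, hμt, hsign⟩ :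
      ∃ μ : ℝ, μ ^ 2 = x * μ + 1 ∧ μ ^ 2 = t ^ 2 ∧ x * μ ≤ 0 := by
    by_cases hx : 0 ≤ x
    · refine ⟨-t, ?_, by ring, by nlinarith⟩
      rw [abs_of_nonneg hx] at hkey; nlinarith
    · have hx' : x < 0 := lt_of_not_ge hx
      refine ⟨t, ?_, rfl, by nlinarith⟩
      rw [abs_of_neg hx'] at hkey; nlinarith
  have hd : (0:ℝ) < (x - μ) ^ 2 + 1 := by positivity
  set M : Matrix (Fin 2) (Fin 2) ℝ :=
    Matrix.vecMulVec ![(x - μ) / ((x - μ) ^ 2 + 1) * (x - μ), (x - μ) / ((x - μ) ^ 2 + 1)]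
      ![x - μ, 1] with hMdef
  have hMrank : M.rank ≤ 1 := rank_vecMulVec_le' _ _
  have hA := Wmat_sub (x := x) (μ := μ) hμsq
  rw [← hMdef] at hA
  have hfrob : frobNorm (Wmat x - M) = t := by
    rw [hA]
    unfold frobNorm
    rw [Fin.sum_univ_two, Fin.sum_univ_two, Fin.sum_univ_two]
    simp only [Matrix.cons_val', Matrix.cons_val_zero, Matrix.cons_val_one, Matrix.head_cons,
      Matrix.empty_val', Matrix.cons_val_fin_one, Matrix.head_fin_const, Matrix.of_apply]
    rw [sum_alg x t μ hμsq hμt, Real.sqrt_sq htpos.le]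
  have hmem : t ∈ {r : ℝ | ∃ M : Matrix (Fin 2) (Fin 2) ℝ, M.rank ≤ 1 ∧ r = frobNorm (Wmat x - M)} :=
    ⟨M, hMrank, hfrob.symm⟩
  have hlb : ∀ r ∈ {r : ℝ | ∃ M : Matrix (Fin 2) (Fin 2) ℝ, M.rank ≤ 1 ∧ r = frobNorm (Wmat x - M)},
      t ≤ r := by
    rintro r ⟨N, hN, rfl⟩
    obtain ⟨v, hv, hNv⟩ := exists_ker N hN
    have m0 : N 0 0 * v 0 + N 0 1 * v 1 = 0 := by
      have := congrFun hNv 0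
      simpa [Matrix.mulVec, dotProduct, Fin.sum_univ_two] using this
    have m1 : N 1 0 * v 0 + N 1 1 * v 1 = 0 := by
      have := congrFun hNv 1
      simpa [Matrix.mulVec, dotProduct, Fin.sum_univ_two] using this
    have e0 : (Wmat x - N) 0 0 * v 0 + (Wmat x - N) 0 1 * v 1 = x * v 0 + v 1 := by
      simp [Wmat, Matrix.sub_apply]; linarith
    have e1 : (Wmat x - N) 1 0 * v 0 + (Wmat x - N) 1 1 * v 1 = v 0 := by
      simp [Wmat, Matrix.sub_apply]; linarith
    have hvpos : 0 < v 0 ^ 2 + v 1 ^ 2 := by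
      rcases Function.ne_iff.mp hv with ⟨i, hi⟩
      fin_cases i <;> simp at hi <;> positivity
    have hq := lb_alg x t μ ((Wmat x - N) 0 0) ((Wmat x - N) 0 1) ((Wmat x - N) 1 0)
      ((Wmat x - N) 1 1) (v 0) (v 1) htpos hμsq hμt hsign hvpos e0 e1
    unfold frobNorm
    rw [Fin.sum_univ_two, Fin.sum_univ_two, Fin.sum_univ_two]
    rw [show t = Real.sqrt (t ^ 2) from (Real.sqrt_sq htpos.le).symm]
    exact Real.sqrt_le_sqrt (by linarith)
  exact le_antisymm (csInf_le ⟨t, hlb⟩ hmem) (le_csInf ⟨t, hmem⟩ hlb)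

lemma solSet_eq_Wmat (W : Matrix (Fin 2) (Fin 2) ℝ) (hW : W ∈ solSet) : W = Wmat (W 0 0) := by
  obtain ⟨h01, h10, h11⟩ := hW
  ext i j
  fin_cases i <;> fin_cases j <;> simp [Wmat, h01, h10, h11]

lemma rank_solSet (W : Matrix (Fin 2) (Fin 2) ℝ) (hW : W ∈ solSet) : W.rank = 2 := by
  obtain ⟨h01, h10, h11⟩ := hW
  have hdet : W.det = -1 := by rw [Matrix.det_fin_two, h01, h10, h11]; ring
  have hu : IsUnit W := (Matrix.isUnit_iff_isUnit_det W).mpr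
    (by rw [hdet]; exact isUnit_iff_ne_zero.mpr (by norm_num))
  rw [Matrix.rank_of_isUnit W hu]
  simp

lemma Wmat_mem_solSet (x : ℝ) : Wmat x ∈ solSet := by
  refine ⟨?_, ?_, ?_⟩ <;> simp [Wmat]

/-- **Distance from infimal rank along the solution set.**  For every `x`,
`D(W_x, M₁) = s₂(x)`; `s₂` is even, strictly decreasing on `[0,∞)`, attains its
maximum value `1` at `x = 0`, and tends to `0` as `|x| → ∞`.  Every `W ∈ S` has
rank `2`, yet `inf_{W ∈ S} D(W, M₁) = 0` (the infimal rank of `S` is `1`). -/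
theorem dist_from_rank_one_along_solution_set :
    (∀ x : ℝ, distRank1 (Wmat x) = s2 x) ∧
    (∀ x : ℝ, s2 (-x) = s2 x) ∧
    StrictAntiOn s2 (Set.Ici 0) ∧
    s2 0 = 1 ∧ (∀ x : ℝ, s2 x ≤ 1) ∧
    Tendsto s2 atTop (nhds 0) ∧
    Tendsto s2 atBot (nhds 0) ∧
    (∀ W ∈ solSet, W.rank = 2) ∧
    sInf (distRank1 '' solSet) = 0 := by
  refine ⟨distRank1_Wmat, s2_even, s2_anti, s2_zero, s2_le_one, s2_tendsto_top, s2_tendsto_bot,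
    rank_solSet, ?_⟩
  have himg : ∀ r ∈ distRank1 '' solSet, 0 ≤ r := by
    rintro r ⟨W, hW, rfl⟩
    rw [solSet_eq_Wmat W hW, distRank1_Wmat]
    exact (s2_pos _).le
  have hub : ∀ x : ℝ, sInf (distRank1 '' solSet) ≤ s2 x := fun x =>
    csInf_le ⟨0, himg⟩ ⟨Wmat x, Wmat_mem_solSet x, distRank1_Wmat x⟩
  have h1 : sInf (distRank1 '' solSet) ≤ 0 :=
    ge_of_tendsto s2_tendsto_top (Eventually.of_forall hub)
  have h2 : 0 ≤ sInf (distRank1 '' solSet) :=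
    le_csInf ⟨distRank1 (Wmat 0), Wmat 0, Wmat_mem_solSet 0, rfl⟩ himg
  linarith
end

section
/- Consider gradient flow on a depth-L matrix factorization applied to an arbitrary matrix completion task with square factors W_l : [0,∞) → ℝ^{d×d}. Then the unbalancedness magnitude is a conserved quantity: denoting by ε(t) the unbalancedness magnitude of (W₁(t), …, W_L(t)), one has ε(t) = ε(0) for all t ≥ 0. In fact, for every l = 1,…,L−1 and all t ≥ 0, W_{l+1}(t)ᵀ W_{l+1}(t) − W_l(t) W_l(t)ᵀ = W_{l+1}(0)ᵀ W_{l+1}(0) − W_l(0) W_l(0)ᵀ. -/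
/-!
Under gradient flow `Ẇ_l = -Pᵀ G Qᵀ`, with `G = ∇ℓ(W_{L:1})` and `P`, `Q` the products of
the factors above and below `W_l`. Hence `X := W_{l+1}ᵀ Ẇ_{l+1}` and `Ẇ_l W_lᵀ` are the same
matrix, and the derivative of `W_{l+1}ᵀ W_{l+1} - W_l W_lᵀ` is `Xᵀ + X - X - Xᵀ = 0`.
So each of these matrices is constant in time, and with them the unbalancedness magnitude.
-/

open Matrix

/-- The prefix product `W_{l−1}(t)⋯W_0(t)` of the first `l` factors (identity for `l = 0`). -/
noncomputable def prodUpTo (d : ℕ) (W : ℕ → ℝ → Matrix (Fin d) (Fin d) ℝ) (l : ℕ)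
    (t : ℝ) : Matrix (Fin d) (Fin d) ℝ :=
  (((List.range l).map fun i => W i t).reverse).prod

/-- The suffix product `W_{L−1}(t)⋯W_l(t)` of the last `L − l` factors (identity for `l = L`). -/
noncomputable def prodFrom (d L : ℕ) (W : ℕ → ℝ → Matrix (Fin d) (Fin d) ℝ) (l : ℕ)
    (t : ℝ) : Matrix (Fin d) (Fin d) ℝ :=
  (((List.range (L - l)).map fun i => W (l + i) t).reverse).prod

/-- The gradient of the matrix-completion loss
`ℓ(W) = ½ Σ_{(i,j)∈Ω} (W_{ij} − b_{ij})²`: entry `W_{ij} − b_{ij}` on observed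
locations, `0` elsewhere. -/
noncomputable def mcGradGen {d : ℕ} (Obs : Finset (Fin d × Fin d)) (b : Fin d → Fin d → ℝ)
    (A : Matrix (Fin d) (Fin d) ℝ) : Matrix (Fin d) (Fin d) ℝ :=
  Matrix.of fun i j => if (i, j) ∈ Obs then A i j - b i j else 0

/-- The nuclear norm `‖M‖_* = tr √(MᵀM)` of a real square matrix. -/
noncomputable def nuclearNorm {d : ℕ} (M : Matrix (Fin d) (Fin d) ℝ) : ℝ :=
  ((Matrix.posSemidef_conjTranspose_mul_self M).1.eigenvectorUnitary.1 *
    Matrix.diagonal (fun i => Real.sqrt ((Matrix.posSemidef_conjTranspose_mul_self M).1.eigenvalues i)) *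
    (star (Matrix.posSemidef_conjTranspose_mul_self M).1.eigenvectorUnitary :
      Matrix (Fin d) (Fin d) ℝ)).trace


section EntrywiseDeriv

variable {m n p : Type*} [Fintype n]

lemma hasDerivAt_mul_apply {A : ℝ → Matrix m n ℝ} {B : ℝ → Matrix n p ℝ}
    {A' : Matrix m n ℝ} {B' : Matrix n p ℝ} {t : ℝ}
    (hA : ∀ i j, HasDerivAt (fun s => A s i j) (A' i j) t)
    (hB : ∀ i j, HasDerivAt (fun s => B s i j) (B' i j) t) (i : m) (k : p) :
    HasDerivAt (fun s => (A s * B s) i k) ((A' * B t + A t * B') i k) t := by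
  simp only [mul_apply, Matrix.add_apply, ← Finset.sum_add_distrib]
  exact HasDerivAt.fun_sum fun j _ => (hA i j).mul (hB j k)

lemma hasDerivAt_transpose_mul_self_sub_mul_transpose_eq_zero {V U : ℝ → Matrix n n ℝ}
    {V' U' : Matrix n n ℝ} {t : ℝ}
    (hV : ∀ i j, HasDerivAt (fun s => V s i j) (V' i j) t)
    (hU : ∀ i j, HasDerivAt (fun s => U s i j) (U' i j) t)
    (h : (V t)ᵀ * V' = U' * (U t)ᵀ) (i j : n) :
    HasDerivAt (fun s => ((V s)ᵀ * V s - U s * (U s)ᵀ) i j) 0 t := by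
  have hV_T : ∀ i j, HasDerivAt (fun s => (V s)ᵀ i j) (V'ᵀ i j) t := fun i j => hV j i
  have hU_T : ∀ i j, HasDerivAt (fun s => (U s)ᵀ i j) (U'ᵀ i j) t := fun i j => hU j i
  have h_T : V'ᵀ * V t = U t * U'ᵀ := by
    simpa only [transpose_mul, transpose_transpose] using congrArg transpose h
  have hderiv := (hasDerivAt_mul_apply hV_T hV i j).fun_sub (hasDerivAt_mul_apply hU hU_T i j)
  rw [h, h_T] at hderiv
  simpa only [Matrix.sub_apply, Matrix.add_apply, add_comm, sub_self] using hderiv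

lemma eq_of_forall_hasDerivAt_apply_zero {M : ℝ → Matrix m p ℝ} {a t : ℝ}
    (hM : ∀ s, a ≤ s → ∀ i j, HasDerivAt (fun s => M s i j) 0 s) (ht : a ≤ t) :
    M t = M a := by
  ext i j
  refine constant_of_has_deriv_right_zero (f := fun s => M s i j) (b := t)
    (fun s hs => (hM s hs.1 i j).continuousAt.continuousWithinAt)
    (fun s hs => (hM s hs.1 i j).hasDerivWithinAt) t ⟨ht, le_rfl⟩

end EntrywiseDeriv

noncomputable def gradFlowVelocity {d : ℕ} (Obs : Finset (Fin d × Fin d)) (b : Fin d → Fin d → ℝ)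
    (W : ℕ → ℝ → Matrix (Fin d) (Fin d) ℝ) (L l : ℕ) (t : ℝ) : Matrix (Fin d) (Fin d) ℝ :=
  -((prodFrom d L W (l + 1) t)ᵀ * mcGradGen Obs b (prodUpTo d W L t) * (prodUpTo d W l t)ᵀ)

section GradientFlow

variable {d L : ℕ} {W : ℕ → ℝ → Matrix (Fin d) (Fin d) ℝ}

lemma prodUpTo_succ (l : ℕ) (t : ℝ) :
    prodUpTo d W (l + 1) t = W l t * prodUpTo d W l t := by
  simp [prodUpTo, List.range_succ]

lemma prodFrom_eq_mul {l : ℕ} (hl : l < L) (t : ℝ) :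
    prodFrom d L W l t = prodFrom d L W (l + 1) t * W l t := by
  obtain ⟨k, hk⟩ : ∃ k, L - l = k + 1 := ⟨L - (l + 1), by omega⟩
  have hk' : L - (l + 1) = k := by omega
  simp only [prodFrom, hk, hk', List.range_succ_eq_map, List.map_cons, List.map_map,
    List.reverse_cons, List.prod_append, List.prod_cons, List.prod_nil, mul_one, add_zero,
    Function.comp_def, Nat.succ_eq_add_one, add_assoc, add_comm 1]

lemma transpose_mul_gradFlowVelocity_succ (Obs : Finset (Fin d × Fin d))
    (b : Fin d → Fin d → ℝ) {l : ℕ} (hl : l + 1 < L) (t : ℝ) :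
    (W (l + 1) t)ᵀ * gradFlowVelocity Obs b W L (l + 1) t =
      gradFlowVelocity Obs b W L l t * (W l t)ᵀ := by
  simp only [gradFlowVelocity, prodFrom_eq_mul hl, prodUpTo_succ, transpose_mul, mul_neg,
    neg_mul, Matrix.mul_assoc]

end GradientFlow

/-- **Unbalancedness magnitude is conserved under gradient flow.**
For gradient flow on a depth-`L` matrix factorization applied to an arbitrary matrix
completion task (observed locations `Obs`, values `b`) with square factors:
for every `l` with `l+1 < L` and every `t ≥ 0`,
`W_{l+1}(t)ᵀW_{l+1}(t) − W_l(t)W_l(t)ᵀ = W_{l+1}(0)ᵀW_{l+1}(0) − W_l(0)W_l(0)ᵀ`;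
consequently the unbalancedness magnitude `ε(t)` satisfies `ε(t) = ε(0)`. -/
theorem unbalancedness_conserved
    (d L : ℕ)
    (Obs : Finset (Fin d × Fin d)) (b : Fin d → Fin d → ℝ)
    (W : ℕ → ℝ → Matrix (Fin d) (Fin d) ℝ)
    (hGF : ∀ l, l < L → ∀ t : ℝ, 0 ≤ t → ∀ i j,
      HasDerivAt (fun s => W l s i j)
        ((-((prodFrom d L W (l + 1) t)ᵀ * mcGradGen Obs b (prodUpTo d W L t) *
            (prodUpTo d W l t)ᵀ)) i j) t) :
    (∀ l, l + 1 < L → ∀ t : ℝ, 0 ≤ t →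
      (W (l + 1) t)ᵀ * W (l + 1) t - W l t * (W l t)ᵀ =
        (W (l + 1) 0)ᵀ * W (l + 1) 0 - W l 0 * (W l 0)ᵀ) ∧
    (∀ t : ℝ, 0 ≤ t →
      sSup {r : ℝ | ∃ l, l + 1 < L ∧
          r = nuclearNorm ((W (l + 1) t)ᵀ * W (l + 1) t - W l t * (W l t)ᵀ)} =
        sSup {r : ℝ | ∃ l, l + 1 < L ∧
          r = nuclearNorm ((W (l + 1) 0)ᵀ * W (l + 1) 0 - W l 0 * (W l 0)ᵀ)}) := by
  have hbalance : ∀ l, l + 1 < L → ∀ t : ℝ, 0 ≤ t →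
      (W (l + 1) t)ᵀ * W (l + 1) t - W l t * (W l t)ᵀ =
        (W (l + 1) 0)ᵀ * W (l + 1) 0 - W l 0 * (W l 0)ᵀ := fun l hl _ ht =>
    eq_of_forall_hasDerivAt_apply_zero
      (fun s hs => hasDerivAt_transpose_mul_self_sub_mul_transpose_eq_zero
        (hGF (l + 1) hl s hs) (hGF l (by omega) s hs)
        (transpose_mul_gradFlowVelocity_succ Obs b hl s)) ht
  refine ⟨hbalance, fun t ht => ?_⟩
  congr 1
  ext r
  exact exists_congr fun l => and_congr_right fun hl => by rw [hbalance l hl t ht]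
end
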